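/- The Gauss map preserves the Gauss measure: for every Borel set B ⊆ [0,1), μ(T^{-1}B) = μ(B), where T is the Gauss map and μ the Gauss measure. -/

import Mathlib

open MeasureTheory Filter Set

/-- The Gauss map `x ↦ 1/x - ⌊1/x⌋` (sending `0` to `0`). -/
noncomputable def gaussMap (x : ℝ) : ℝ := Int.fract x⁻¹

/-- The Gauss measure `μ(B) = (1/log 2) ∫_B dx/(1+x)` on `[0,1)`. -/
noncomputable def gaussMeasure : Measure ℝ :=
  (volume.restrict (Set.Ico (0:ℝ) 1)).withDensity
    (fun x => ENNReal.ofReal (1 / ((1 + x) * Real.log 2)))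

/-- The `n`-th continued fraction digit `a_{n+1}` of `x`. -/
noncomputable def cfDigit (x : ℝ) (n : ℕ) : ℤ := ⌊(gaussMap^[n] x)⁻¹⌋

/-- The cylinder set of points of `[0,1)` whose continued fraction expansion starts with `s`. -/
noncomputable def cylinder (s : List ℕ+) : Set ℝ :=
  {x ∈ Set.Ico (0:ℝ) 1 | ∀ i (h : i < s.length), cfDigit x i = (s.get ⟨i, h⟩ : ℕ)}

/-- A point of `[0,1)` is CF-normal if every finite string of positive integers occurs among
its continued fraction digits with limiting frequency equal to the Gauss measure of the
corresponding cylinder set. -/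
noncomputable def CFNormal (x : ℝ) : Prop :=
  ∀ s : List ℕ+, s ≠ [] →
    Filter.Tendsto
      (fun n : ℕ => (Nat.card {i : ℕ | i ≤ n ∧ gaussMap^[i] x ∈ cylinder s} : ℝ) / n)
      Filter.atTop (nhds (gaussMeasure (cylinder s)).toReal)

/-- The Gauss–Kuzmin transfer operator. -/
noncomputable def transferOp (f : ℝ → ℝ) (x : ℝ) : ℝ :=
  ∑' k : ℕ, (1 + x) / (((k:ℝ) + 1 + x) * ((k:ℝ) + 2 + x)) * f (1 / ((k:ℝ) + 1 + x))

/-- Wirsing's operator. -/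
noncomputable def wirsingOp (g : ℝ → ℝ) (x : ℝ) : ℝ :=
  ∑' k : ℕ,
    (((k:ℝ) + 1) / (((k:ℝ) + 2 + x) ^ 2) *
        (∫ y in (1 / ((k:ℝ) + 2 + x))..(1 / ((k:ℝ) + 1 + x)), g y) +
      (1 + x) / (((k:ℝ) + 1 + x) ^ 3 * ((k:ℝ) + 2 + x)) * g (1 / ((k:ℝ) + 1 + x)))

/-!
For `0 < c ≤ 1`, a point `x ∈ (0, 1]` satisfies `T x < c` exactly when `1/x ∈ [n + 1, n + 1 + c)`
for some `n`, i.e. when `x ∈ (1/(n+1+c), 1/(n+1)]`. Since `μ (u, v] = log₂ (1 + v) - log₂ (1 + u)`,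
the `n`-th interval has measure `log₂ (1 + c/(n+1)) - log₂ (1 + c/(n+2))`, and these telescope to
`log₂ (1 + c) = μ [0, c)`. So `T` preserves the measure of every half-line `(-∞, c)`, and two
finite measures on `ℝ` that agree on all half-lines are equal.
-/

open Real Topology Function

lemma hasSum_sub_succ_of_antitone {f : ℕ → ℝ} {l : ℝ} (hf : Antitone f)
    (hl : Tendsto f atTop (𝓝 l)) : HasSum (fun n => f n - f (n + 1)) (f 0 - l) := by
  rw [hasSum_iff_tendsto_nat_of_nonneg fun n => sub_nonneg.2 (hf n.le_succ)]
  simpa only [Finset.sum_range_sub'] using tendsto_const_nhds.sub hl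

lemma mem_Ioc_inv_iff {a b x : ℝ} (ha : 0 < a) (hb : 0 < b) (hx : 0 < x) :
    x ∈ Ioc a⁻¹ b⁻¹ ↔ x⁻¹ ∈ Ico b a := by
  rw [mem_Ioc, mem_Ico, inv_lt_comm₀ ha hx, le_inv_comm₀ hx hb, and_comm]

lemma floor_eq_of_mem_Ico {y c : ℝ} {n : ℕ} (hc : c ≤ 1)
    (hy : y ∈ Ico ((n : ℝ) + 1) (n + 1 + c)) :
    ⌊y⌋ = n + 1 :=
  Int.floor_eq_iff.2 ⟨by push_cast; exact hy.1, by push_cast; linarith [hy.2]⟩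

lemma fract_lt_iff_exists_mem_Ico {y c : ℝ} (hy : 1 ≤ y) (hc : c ≤ 1) :
    Int.fract y < c ↔ ∃ n : ℕ, y ∈ Ico ((n : ℝ) + 1) (n + 1 + c) := by
  constructor
  · intro h
    have h1 : 1 ≤ ⌊y⌋ := Int.le_floor.2 (by exact_mod_cast hy)
    obtain ⟨n, hn⟩ : ∃ n : ℕ, ⌊y⌋ = n + 1 := ⟨(⌊y⌋ - 1).toNat, by omega⟩
    have hfl : (⌊y⌋ : ℝ) = n + 1 := by exact_mod_cast hn
    refine ⟨n, hfl ▸ Int.floor_le y, ?_⟩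
    rw [Int.fract, hfl] at h
    linarith
  · rintro ⟨n, hn⟩
    rw [Int.fract, floor_eq_of_mem_Ico hc hn]
    push_cast
    linarith [hn.2]

lemma floor_inv_eq_of_mem_Ioc {x c : ℝ} {n : ℕ} (hc0 : 0 ≤ c) (hc1 : c ≤ 1)
    (hx : x ∈ Ioc ((n + 1 + c : ℝ)⁻¹) ((n + 1 : ℝ)⁻¹)) : ⌊x⁻¹⌋ = n + 1 :=
  floor_eq_of_mem_Ico hc1 <| (mem_Ioc_inv_iff (by positivity) (by positivity)
    ((inv_pos.2 (by positivity)).trans hx.1)).1 hx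

lemma measurable_gaussMap : Measurable gaussMap :=
  measurable_fract.comp measurable_inv

lemma gaussMap_preimage_Iio_inter_Ioc {c : ℝ} (hc0 : 0 ≤ c) (hc1 : c ≤ 1) :
    gaussMap ⁻¹' Iio c ∩ Ioc 0 1 =
      ⋃ n : ℕ, Ioc ((n + 1 + c : ℝ)⁻¹) ((n + 1 : ℝ)⁻¹) := by
  ext x
  simp only [mem_inter_iff, mem_preimage, mem_Iio, mem_iUnion, gaussMap]
  constructor
  · rintro ⟨h, hx0, hx1⟩
    obtain ⟨n, hn⟩ := (fract_lt_iff_exists_mem_Ico (one_le_inv₀ hx0 |>.2 hx1) hc1).1 h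
    exact ⟨n, (mem_Ioc_inv_iff (by positivity) (by positivity) hx0).2 hn⟩
  · rintro ⟨n, hn⟩
    have hx0 : 0 < x := (inv_pos.2 (by positivity)).trans hn.1
    have hx1 : x ≤ 1 := hn.2.trans (inv_le_one_of_one_le₀ (by simp))
    refine ⟨(fract_lt_iff_exists_mem_Ico (one_le_inv₀ hx0 |>.2 hx1) hc1).2
      ⟨n, (mem_Ioc_inv_iff (by positivity) (by positivity) hx0).1 hn⟩, hx0, hx1⟩

lemma gaussMeasure_eq_withDensity_Ioc : gaussMeasure =
    (volume.restrict (Ioc (0 : ℝ) 1)).withDensity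
      (fun x => ENNReal.ofReal (1 / ((1 + x) * Real.log 2))) := by
  rw [gaussMeasure, Measure.restrict_congr_set Ico_ae_eq_Ioc]

lemma gaussMeasure_inter_Ioc (s : Set ℝ) : gaussMeasure (s ∩ Ioc 0 1) = gaussMeasure s := by
  simp only [gaussMeasure_eq_withDensity_Ioc, withDensity_apply',
    Measure.restrict_restrict' measurableSet_Ioc, inter_assoc, inter_self]

instance : NullSingletonClass gaussMeasure := by
  rw [gaussMeasure]
  infer_instance

lemma gaussMeasure_Ioc {u v : ℝ} (hu : 0 ≤ u) (huv : u ≤ v) (hv : v ≤ 1) :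
    gaussMeasure (Ioc u v) = ENNReal.ofReal (logb 2 (1 + v) - logb 2 (1 + u)) := by
  have hpos : ∀ x ∈ uIcc u v, 0 < 1 + x := fun x hx => by
    rw [uIcc_of_le huv] at hx; linarith [hx.1]
  have hderiv : ∀ x ∈ uIcc u v,
      HasDerivAt (fun x => logb 2 (1 + x)) (1 / ((1 + x) * Real.log 2)) x := fun x hx =>
    ((((hasDerivAt_id' x).const_add 1).log (hpos x hx).ne').div_const (Real.log 2)).congr_deriv
      (by field_simp)
  have hcont : ContinuousOn (fun x : ℝ => 1 / ((1 + x) * Real.log 2)) (uIcc u v) :=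
    continuousOn_const.div (by fun_prop) fun x hx =>
      mul_ne_zero (hpos x hx).ne' (Real.log_pos one_lt_two).ne'
  rw [gaussMeasure_eq_withDensity_Ioc, withDensity_apply _ measurableSet_Ioc,
    Measure.restrict_restrict measurableSet_Ioc, inter_eq_left.2 (Ioc_subset_Ioc hu hv),
    ← ofReal_integral_eq_lintegral_ofReal, ← intervalIntegral.integral_of_le huv,
    intervalIntegral.integral_eq_sub_of_hasDerivAt hderiv hcont.intervalIntegrable]
  · exact hcont.integrableOn_uIcc.mono_set (by rw [uIcc_of_le huv]; exact Ioc_subset_Icc_self)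
  · filter_upwards [ae_restrict_mem measurableSet_Ioc] with x hx
    have := hpos x (by rw [uIcc_of_le huv]; exact Ioc_subset_Icc_self hx)
    have := Real.log_pos one_lt_two
    positivity

instance : IsProbabilityMeasure gaussMeasure := by
  constructor
  rw [← gaussMeasure_inter_Ioc, univ_inter, gaussMeasure_Ioc le_rfl zero_le_one le_rfl]
  norm_num [logb_self_eq_one]

lemma gaussMeasure_Ioc_inv {c : ℝ} (hc : 0 ≤ c) (n : ℕ) :
    gaussMeasure (Ioc ((n + 1 + c : ℝ)⁻¹) ((n + 1 : ℝ)⁻¹)) =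
      ENNReal.ofReal (logb 2 (1 + c / (n + 1)) - logb 2 (1 + c / (n + 1 + 1))) := by
  rw [gaussMeasure_Ioc (by positivity) (inv_anti₀ (by positivity) (by linarith))
    (inv_le_one_of_one_le₀ (by simp))]
  have key : (1 + (n + 1 : ℝ)⁻¹) * (1 + c / (n + 1 + 1)) =
      (1 + c / (n + 1)) * (1 + (n + 1 + c)⁻¹) := by
    field_simp
    ring
  have := congrArg (logb 2) key
  rw [logb_mul (by positivity) (by positivity), logb_mul (by positivity) (by positivity)] at this
  congr 1
  linarith

lemma gaussMeasure_iUnion_Ioc_inv {c : ℝ} (hc0 : 0 ≤ c) (hc1 : c ≤ 1) :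
    gaussMeasure (⋃ n : ℕ, Ioc ((n + 1 + c : ℝ)⁻¹) ((n + 1 : ℝ)⁻¹)) =
      ENNReal.ofReal (logb 2 (1 + c)) := by
  set g : ℕ → ℝ := fun n => logb 2 (1 + c / (n + 1))
  have hanti : Antitone g := antitone_nat_of_succ_le fun n => by
    refine logb_le_logb_of_le one_lt_two (by positivity) ?_
    gcongr
    linarith
  have hlim : Tendsto g atTop (𝓝 0) := by
    have h : Tendsto (fun n : ℕ => 1 + c / ((n : ℝ) + 1)) atTop (𝓝 1) := by
      simpa using tendsto_const_nhds.add
        ((tendsto_const_div_atTop_nhds_zero_nat c).comp (tendsto_add_atTop_nat 1))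
    simpa [g, comp_def] using (continuousAt_logb one_ne_zero).tendsto.comp h
  have hsum := hasSum_sub_succ_of_antitone hanti hlim
  have hdisj : Pairwise (Disjoint on fun n : ℕ => Ioc ((n + 1 + c : ℝ)⁻¹) ((n + 1 : ℝ)⁻¹)) :=
    fun m n hmn => disjoint_left.2 fun x hm hn => hmn <| by
      have hm := floor_inv_eq_of_mem_Ioc hc0 hc1 hm
      have hn := floor_inv_eq_of_mem_Ioc hc0 hc1 hn
      omega
  rw [measure_iUnion hdisj fun _ => measurableSet_Ioc]
  have hterm : ∀ n : ℕ, gaussMeasure (Ioc ((n + 1 + c : ℝ)⁻¹) ((n + 1 : ℝ)⁻¹)) =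
      ENNReal.ofReal (g n - g (n + 1)) := fun n => by
    simp only [gaussMeasure_Ioc_inv hc0, g, Nat.cast_succ]
  simp only [hterm]
  rw [← ENNReal.ofReal_tsum_of_nonneg (fun n => sub_nonneg.2 (hanti n.le_succ)) hsum.summable,
    hsum.tsum_eq]
  simp [g]

lemma gaussMeasure_preimage_Iio (c : ℝ) :
    gaussMeasure (gaussMap ⁻¹' Iio c) = gaussMeasure (Iio c) := by
  rcases le_or_gt c 0 with hc0 | hc0
  · have hT : gaussMap ⁻¹' Iio c = ∅ :=
      eq_empty_of_forall_notMem fun x hx => (hx.trans_le hc0).not_ge (Int.fract_nonneg _)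
    have hI : Iio c ∩ Ioc 0 1 = ∅ :=
      eq_empty_of_forall_notMem fun x hx => (hx.1.trans_le hc0).not_gt hx.2.1
    rw [hT, ← gaussMeasure_inter_Ioc (Iio c), hI]
  rcases le_or_gt c 1 with hc1 | hc1
  · have hI : Iio c ∩ Ioc 0 1 = Ioo 0 c := by
      ext x
      simp only [mem_inter_iff, mem_Iio, mem_Ioc, mem_Ioo]
      grind
    rw [← gaussMeasure_inter_Ioc, gaussMap_preimage_Iio_inter_Ioc hc0.le hc1,
      gaussMeasure_iUnion_Ioc_inv hc0.le hc1, ← gaussMeasure_inter_Ioc (Iio c), hI,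
      measure_congr Ioo_ae_eq_Ioc, gaussMeasure_Ioc le_rfl hc0.le hc1]
    simp
  · have hT : gaussMap ⁻¹' Iio c = univ :=
      eq_univ_of_forall fun x => (Int.fract_lt_one _).trans hc1
    rw [hT, ← gaussMeasure_inter_Ioc (Iio c), ← gaussMeasure_inter_Ioc univ, univ_inter,
      inter_eq_right.2 fun x hx => hx.2.trans_lt hc1]

lemma measurePreserving_gaussMap : MeasurePreserving gaussMap gaussMeasure gaussMeasure := by
  refine ⟨measurable_gaussMap, Measure.ext_of_Ico_finite _ _ ?_ fun a b hab => ?_⟩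
  · rw [Measure.map_apply measurable_gaussMap MeasurableSet.univ, preimage_univ]
  rw [Measure.map_apply measurable_gaussMap measurableSet_Ico, ← Iio_sdiff_Iio, preimage_sdiff,
    measure_sdiff (preimage_mono (Iio_subset_Iio hab.le))
      (measurable_gaussMap measurableSet_Iio).nullMeasurableSet (measure_ne_top _ _),
    measure_sdiff (Iio_subset_Iio hab.le) measurableSet_Iio.nullMeasurableSet (measure_ne_top _ _),
    gaussMeasure_preimage_Iio, gaussMeasure_preimage_Iio]

theorem gaussMap_measurePreserving :
    ∀ B : Set ℝ, B ⊆ Set.Ico (0 : ℝ) 1 → MeasurableSet B →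
      gaussMeasure (gaussMap ⁻¹' B) = gaussMeasure B :=
  fun _ _ hB => measurePreserving_gaussMap.measure_preimage hB.nullMeasurableSet
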